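/- Let n ≥ 1, α ∈ ℝ, t ∈ (0,∞), p ∈ (1,∞), r ∈ (1,∞), q ∈ [1,∞), and let p', q', r' be conjugate exponents (1/p+1/p' = 1/q+1/q' = 1/r+1/r' = 1). Then for all measurable functions T, f : ℝⁿ → ℂ, ∫_{ℝⁿ} |T(x) f(x)| dx ≤ ‖T‖_{(K̇E^{-α,p'}_{q',r'})_t} · ‖f‖_{(K̇E^{α,p}_{q,r})_t}; in particular every T ∈ (K̇E^{-α,p'}_{q',r'})_t(ℝⁿ) induces a bounded linear functional f ↦ ∫_{ℝⁿ} T f on (K̇E^{α,p}_{q,r})_t(ℝⁿ). -/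

import Mathlib

open MeasureTheory Metric Set ENNReal
open scoped NNReal

noncomputable section

abbrev En (n : ℕ) : Type := EuclideanSpace ℝ (Fin n)

/-- Slice norm `‖f‖_{(E_r^q)_t}` for `ℝ≥0∞`-valued functions. -/
def sliceNorm (n : ℕ) (t r : ℝ) (q : ℝ≥0∞) (g : En n → ℝ≥0∞) : ℝ≥0∞ :=
  if q = ∞ then
    essSup (fun x => ((volume (ball x t))⁻¹ * ∫⁻ y in ball x t, g y ^ r) ^ (1 / r)) volume
  else
    (∫⁻ x, (((volume (ball x t))⁻¹ * ∫⁻ y in ball x t, g y ^ r) ^ (1 / r)) ^ q.toReal) ^ (1 / q.toReal)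

/-- Slice norm of a complex-valued function. -/
def sliceNormC (n : ℕ) (t r : ℝ) (q : ℝ≥0∞) (f : En n → ℂ) : ℝ≥0∞ :=
  sliceNorm n t r q fun y => (‖f y‖₊ : ℝ≥0∞)

/-- The ball `B_k = {x : |x| ≤ 2^k}`. -/
def ballZ (n : ℕ) (k : ℤ) : Set (En n) := closedBall 0 ((2 : ℝ) ^ k)

/-- The shell `S_k = B_k \ B_{k-1}`. -/
def shell (n : ℕ) (k : ℤ) : Set (En n) := ballZ n k \ ballZ n (k - 1)

/-- Homogeneous Herz-slice norm of an `ℝ≥0∞`-valued function. -/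
def herzHom (n : ℕ) (t r : ℝ) (q : ℝ≥0∞) (α : ℝ) (p : ℝ≥0∞) (g : En n → ℝ≥0∞) : ℝ≥0∞ :=
  if p = ∞ then
    ⨆ k : ℤ, (2 : ℝ≥0∞) ^ ((k : ℝ) * α) * sliceNorm n t r q ((shell n k).indicator g)
  else
    (∑' k : ℤ, ((2 : ℝ≥0∞) ^ ((k : ℝ) * α) * sliceNorm n t r q ((shell n k).indicator g)) ^ p.toReal) ^ (1 / p.toReal)

/-- Homogeneous Herz-slice norm of a complex-valued function. -/
def herzHomC (n : ℕ) (t r : ℝ) (q : ℝ≥0∞) (α : ℝ) (p : ℝ≥0∞) (f : En n → ℂ) : ℝ≥0∞ :=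
  herzHom n t r q α p fun y => (‖f y‖₊ : ℝ≥0∞)

/-- The `k`-th piece in the non-homogeneous decomposition: `B_0` for `k = 0`, `S_k` for `k ≥ 1`. -/
def pieceN (n : ℕ) (k : ℕ) : Set (En n) := if k = 0 then ballZ n 0 else shell n k

/-- Non-homogeneous Herz-slice norm of an `ℝ≥0∞`-valued function. -/
def herzNonHom (n : ℕ) (t r : ℝ) (q : ℝ≥0∞) (α : ℝ) (p : ℝ≥0∞) (g : En n → ℝ≥0∞) : ℝ≥0∞ :=
  if p = ∞ then
    ⨆ k : ℕ, (2 : ℝ≥0∞) ^ ((k : ℝ) * α) * sliceNorm n t r q ((pieceN n k).indicator g)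
  else
    (∑' k : ℕ, ((2 : ℝ≥0∞) ^ ((k : ℝ) * α) * sliceNorm n t r q ((pieceN n k).indicator g)) ^ p.toReal) ^ (1 / p.toReal)

/-- Non-homogeneous Herz-slice norm of a complex-valued function. -/
def herzNonHomC (n : ℕ) (t r : ℝ) (q : ℝ≥0∞) (α : ℝ) (p : ℝ≥0∞) (f : En n → ℂ) : ℝ≥0∞ :=
  herzNonHom n t r q α p fun y => (‖f y‖₊ : ℝ≥0∞)

/-- Hardy–Littlewood maximal operator. -/
def maximal (n : ℕ) (f : En n → ℂ) (x : En n) : ℝ≥0∞ :=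
  ⨆ (ρ : ℝ) (_ : 0 < ρ), (volume (ball x ρ))⁻¹ * ∫⁻ y in ball x ρ, (‖f y‖₊ : ℝ≥0∞)

/-!
Averaging over the balls `B(x,t)` preserves the integral (Fubini, with `y ∈ B(x,t) ↔ x ∈ B(y,t)`
and translation invariance), so `∫ |T f|` is the integral in `x` of the mean of `|T f|` over
`B(x,t)`. Hölder on each ball bounds that mean by the product of the `r'`- and `r`-power means,
and Hölder in `x` then gives `∫ |T f| ≤ ‖T‖_{(E_{r'}^{q'})_t} ‖f‖_{(E_r^q)_t}`. Applying this on
each shell `S_k` (the shells cover `ℝⁿ \ {0}`) and Hölder for sequences, with the weights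
`2^{-kα} 2^{kα} = 1`, gives the Herz-slice inequality. Slice and Herz-slice norms are `eLpNorm`s
for `volume` and for the counting measure on `ℤ`, so the endpoint exponents need no special case.
-/

section Holder

variable {α : Type*} [MeasurableSpace α] {μ : Measure α}

theorem lintegral_mul_le_eLpNorm_mul_eLpNorm {p q : ℝ≥0∞} [p.HolderConjugate q]
    {f g : α → ℝ≥0∞} (hf : AEMeasurable f μ) (hg : AEMeasurable g μ) :
    ∫⁻ x, f x * g x ∂μ ≤ eLpNorm f p μ * eLpNorm g q μ := by
  have top_one : ∀ {f g : α → ℝ≥0∞}, AEMeasurable g μ →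
      ∫⁻ x, f x * g x ∂μ ≤ eLpNorm f ∞ μ * eLpNorm g 1 μ := by
    intro f g hg
    simp only [eLpNorm_exponent_top, eLpNormEssSup, eLpNorm_one_eq_lintegral_enorm,
      enorm_eq_self]
    calc ∫⁻ x, f x * g x ∂μ ≤ ∫⁻ x, essSup f μ * g x ∂μ :=
          lintegral_mono_ae ((_root_.ae_le_essSup (f := f)).mono fun x hx => mul_le_mul_left hx _)
      _ = essSup f μ * ∫⁻ x, g x ∂μ := lintegral_const_mul'' _ hg
  by_cases hp : p = ∞
  · obtain rfl : q = 1 := (HolderConjugate.eq_top_iff_eq_one p q).1 hp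
    exact hp ▸ top_one hg
  by_cases hq : q = ∞
  · obtain rfl : p = 1 := (HolderConjugate.eq_top_iff_eq_one q p).1 hq
    simpa only [hq, mul_comm] using top_one (f := g) hf
  rw [eLpNorm_eq_lintegral_rpow_enorm_toReal (HolderConjugate.ne_zero p q) hp,
    eLpNorm_eq_lintegral_rpow_enorm_toReal (HolderConjugate.ne_zero q p) hq]
  simp only [enorm_eq_self]
  exact ENNReal.lintegral_mul_le_Lp_mul_Lq μ (HolderConjugate.toReal_of_ne_top hp hq) hf hg

theorem setLAverage_mul_le {r r' : ℝ} (hrr' : r.HolderConjugate r') (s : Set α)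
    {u v : α → ℝ≥0∞} (hu : AEMeasurable u (μ.restrict s)) (hv : AEMeasurable v (μ.restrict s)) :
    (μ s)⁻¹ * ∫⁻ y in s, u y * v y ∂μ ≤
      ((μ s)⁻¹ * ∫⁻ y in s, u y ^ r ∂μ) ^ (1 / r) *
        ((μ s)⁻¹ * ∫⁻ y in s, v y ^ r' ∂μ) ^ (1 / r') := by
  have h1r : 0 ≤ 1 / r := by have := hrr'.pos; positivity
  have h1r' : 0 ≤ 1 / r' := by have := hrr'.symm.pos; positivity
  calc (μ s)⁻¹ * ∫⁻ y in s, u y * v y ∂μ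
      ≤ (μ s)⁻¹ * ((∫⁻ y in s, u y ^ r ∂μ) ^ (1 / r) * (∫⁻ y in s, v y ^ r' ∂μ) ^ (1 / r')) :=
        mul_le_mul_right (ENNReal.lintegral_mul_le_Lp_mul_Lq _ hrr' hu hv) _
    _ = ((μ s)⁻¹) ^ (1 / r + 1 / r') *
          ((∫⁻ y in s, u y ^ r ∂μ) ^ (1 / r) * (∫⁻ y in s, v y ^ r' ∂μ) ^ (1 / r')) := by
        rw [hrr'.one_div_add_one_div, one_div_one, ENNReal.rpow_one]
    _ = _ := by
        rw [ENNReal.rpow_add_of_nonneg _ _ h1r h1r', ENNReal.mul_rpow_of_nonneg _ _ h1r,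
          ENNReal.mul_rpow_of_nonneg _ _ h1r', mul_mul_mul_comm]

end Holder

def ballPowerMean {X : Type*} [PseudoMetricSpace X] [MeasurableSpace X] (μ : Measure X)
    (t r : ℝ) (g : X → ℝ≥0∞) (x : X) : ℝ≥0∞ :=
  ((μ (ball x t))⁻¹ * ∫⁻ y in ball x t, g y ^ r ∂μ) ^ (1 / r)

section Balls

variable {X : Type*} [PseudoMetricSpace X] [SecondCountableTopology X] [MeasurableSpace X]
  [OpensMeasurableSpace X]

theorem measurableSet_mem_ball_fst (t : ℝ) : MeasurableSet {z : X × X | z.2 ∈ ball z.1 t} :=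
  measurableSet_lt (continuous_snd.dist continuous_fst).measurable measurable_const

theorem measurable_setLIntegral_ball (μ : Measure X) [SFinite μ] (t : ℝ) {g : X → ℝ≥0∞}
    (hg : Measurable g) : Measurable fun x => ∫⁻ y in ball x t, g y ∂μ := by
  simp_rw [← lintegral_indicator measurableSet_ball]
  exact Measurable.lintegral_prod_right' <|
    (hg.comp measurable_snd).indicator (measurableSet_mem_ball_fst t)

end Balls

section AddHaar

variable {E : Type*} [NormedAddCommGroup E] [NormedSpace ℝ E] [FiniteDimensional ℝ E]
  [MeasurableSpace E] [BorelSpace E] (μ : Measure E) [μ.IsAddHaarMeasure]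

theorem lintegral_ballAverage {t : ℝ} (ht : 0 < t) {w : E → ℝ≥0∞} (hw : Measurable w) :
    ∫⁻ x, (μ (ball x t))⁻¹ * ∫⁻ y in ball x t, w y ∂μ ∂μ = ∫⁻ y, w y ∂μ := by
  have hc0 : μ (ball 0 t) ≠ 0 := (measure_ball_pos μ 0 ht).ne'
  have hc : μ (ball 0 t) ≠ ∞ := measure_ball_lt_top.ne
  have swap : ∫⁻ x, ∫⁻ y in ball x t, w y ∂μ ∂μ = ∫⁻ y, w y * μ (ball 0 t) ∂μ := by
    simp_rw [← lintegral_indicator measurableSet_ball]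
    have hF : Measurable (Function.uncurry fun x y : E => (ball x t).indicator w y) :=
      (hw.comp measurable_snd).indicator (measurableSet_mem_ball_fst t)
    rw [lintegral_lintegral_swap hF.aemeasurable]
    refine lintegral_congr fun y => ?_
    have hsymm : (fun x => (ball x t).indicator w y) = (ball y t).indicator fun _ => w y := by
      ext x
      simp only [indicator, mem_ball, dist_comm]
    rw [hsymm, lintegral_indicator_const measurableSet_ball, Measure.addHaar_ball_center]
  simp_rw [Measure.addHaar_ball_center μ _ t]
  rw [lintegral_const_mul' _ _ (ENNReal.inv_ne_top.2 hc0), swap, lintegral_mul_const' _ _ hc,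
    mul_comm, mul_assoc, ENNReal.mul_inv_cancel hc0 hc, mul_one]

theorem measurable_ballPowerMean (t r : ℝ) {g : E → ℝ≥0∞} (hg : Measurable g) :
    Measurable (ballPowerMean μ t r g) := by
  have hconst : ballPowerMean μ t r g =
      fun x => ((μ (ball 0 t))⁻¹ * ∫⁻ y in ball x t, g y ^ r ∂μ) ^ (1 / r) := by
    ext x
    rw [ballPowerMean, Measure.addHaar_ball_center]
  rw [hconst]
  exact ((measurable_setLIntegral_ball μ t (hg.pow_const r)).const_mul _).pow_const _

theorem lintegral_mul_le_eLpNorm_ballPowerMean_mul {t r r' : ℝ} (ht : 0 < t)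
    (hrr' : r.HolderConjugate r') {q q' : ℝ≥0∞} [q.HolderConjugate q'] {u v : E → ℝ≥0∞}
    (hu : Measurable u) (hv : Measurable v) :
    ∫⁻ y, u y * v y ∂μ ≤
      eLpNorm (ballPowerMean μ t r u) q μ * eLpNorm (ballPowerMean μ t r' v) q' μ :=
  calc ∫⁻ y, u y * v y ∂μ
      = ∫⁻ x, (μ (ball x t))⁻¹ * ∫⁻ y in ball x t, u y * v y ∂μ ∂μ :=
        (lintegral_ballAverage μ ht (hu.mul hv)).symm
    _ ≤ ∫⁻ x, ballPowerMean μ t r u x * ballPowerMean μ t r' v x ∂μ :=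
        lintegral_mono fun x =>
          setLAverage_mul_le hrr' (ball x t) hu.aemeasurable hv.aemeasurable
    _ ≤ _ := lintegral_mul_le_eLpNorm_mul_eLpNorm
        (measurable_ballPowerMean μ t r hu).aemeasurable
        (measurable_ballPowerMean μ t r' hv).aemeasurable

end AddHaar

theorem sliceNorm_eq_eLpNorm {n : ℕ} {t r : ℝ} {q : ℝ≥0∞} (hq : q ≠ 0) (g : En n → ℝ≥0∞) :
    sliceNorm n t r q g = eLpNorm (ballPowerMean volume t r g) q volume := by
  unfold sliceNorm
  split_ifs with hq_top
  · simp only [hq_top, eLpNorm_exponent_top, eLpNormEssSup, enorm_eq_self]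
    rfl
  · simp only [eLpNorm_eq_lintegral_rpow_enorm_toReal hq hq_top, enorm_eq_self]
    rfl

theorem lintegral_mul_le_sliceNorm_mul_sliceNorm (n : ℕ) {t r r' : ℝ} (ht : 0 < t)
    (hrr' : r.HolderConjugate r') {q q' : ℝ≥0∞} [q.HolderConjugate q'] {u v : En n → ℝ≥0∞}
    (hu : Measurable u) (hv : Measurable v) :
    ∫⁻ y, u y * v y ≤ sliceNorm n t r q u * sliceNorm n t r' q' v := by
  rw [sliceNorm_eq_eLpNorm (HolderConjugate.ne_zero q q'),
    sliceNorm_eq_eLpNorm (HolderConjugate.ne_zero q' q)]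
  exact lintegral_mul_le_eLpNorm_ballPowerMean_mul volume ht hrr' hu hv

theorem mem_shell {n : ℕ} {k : ℤ} {x : En n} :
    x ∈ shell n k ↔ (2 : ℝ) ^ (k - 1) < ‖x‖ ∧ ‖x‖ ≤ (2 : ℝ) ^ k := by
  simp only [shell, ballZ, mem_sdiff, mem_closedBall, dist_zero_right, not_le]
  tauto

theorem measurableSet_shell (n : ℕ) (k : ℤ) : MeasurableSet (shell n k) :=
  measurableSet_closedBall.diff measurableSet_closedBall

theorem pairwise_disjoint_shell (n : ℕ) : Pairwise (Function.onFun Disjoint (shell n)) := by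
  have disjoint_of_lt : ∀ k l : ℤ, k < l → Disjoint (shell n k) (shell n l) := by
    intro k l hkl
    refine Set.disjoint_left.2 fun x hxk hxl => ?_
    have : (2 : ℝ) ^ k ≤ (2 : ℝ) ^ (l - 1) := zpow_le_zpow_right₀ one_le_two (by omega)
    linarith [(mem_shell.1 hxk).2, (mem_shell.1 hxl).1]
  intro k l hkl
  rcases hkl.lt_or_gt with h | h
  · exact disjoint_of_lt k l h
  · exact (disjoint_of_lt l k h).symm

theorem iUnion_shell (n : ℕ) : ⋃ k : ℤ, shell n k = {(0 : En n)}ᶜ := by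
  ext x
  simp only [mem_iUnion, mem_compl_iff, mem_singleton_iff]
  constructor
  · rintro ⟨k, hk⟩ rfl
    rw [mem_shell, norm_zero] at hk
    exact (_root_.zpow_pos two_pos _).not_gt hk.1
  · intro hx
    obtain ⟨m, hm⟩ := exists_mem_Ioc_zpow (norm_pos_iff.2 hx) one_lt_two
    exact ⟨m + 1, mem_shell.2 ⟨by simpa using hm.1, by simpa using hm.2⟩⟩

theorem lintegral_eq_tsum_setLIntegral_shell {n : ℕ} (hn : 1 ≤ n) (w : En n → ℝ≥0∞) :
    ∫⁻ x, w x = ∑' k : ℤ, ∫⁻ x in shell n k, w x := by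
  have : Nonempty (Fin n) := ⟨⟨0, hn⟩⟩
  rw [← lintegral_iUnion (measurableSet_shell n) (pairwise_disjoint_shell n), iUnion_shell,
    restrict_compl_singleton]

theorem herzHom_eq_eLpNorm {n : ℕ} {t r α : ℝ} {q p : ℝ≥0∞} (hp : p ≠ 0) (g : En n → ℝ≥0∞) :
    herzHom n t r q α p g = eLpNorm (fun k : ℤ =>
      (2 : ℝ≥0∞) ^ ((k : ℝ) * α) * sliceNorm n t r q ((shell n k).indicator g)) p .count := by
  unfold herzHom
  split_ifs with hp_top
  · simp only [hp_top, eLpNorm_exponent_top, eLpNormEssSup, enorm_eq_self, essSup_count]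
  · simp only [eLpNorm_eq_lintegral_rpow_enorm_toReal hp hp_top, enorm_eq_self, lintegral_count]

theorem homHerzSlice_holder_general
    (n : ℕ) (hn : 1 ≤ n) (α t r r' : ℝ) (ht : 0 < t) (hr : 1 < r)
    (hrr' : 1 / r + 1 / r' = 1)
    (p p' : ℝ≥0∞) (hpp' : 1 / p + 1 / p' = 1)
    (q q' : ℝ≥0∞) (hqq' : 1 / q + 1 / q' = 1)
    (T f : En n → ℂ) (hT : Measurable T) (hf : Measurable f) :
    ∫⁻ x, (‖T x‖₊ : ℝ≥0∞) * (‖f x‖₊ : ℝ≥0∞)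
      ≤ herzHomC n t r' q' (-α) p' T * herzHomC n t r q α p f := by
  have hr'r : r'.HolderConjugate r :=
    (Real.holderConjugate_iff.2 ⟨hr, by simpa only [one_div] using hrr'⟩).symm
  have : p'.HolderConjugate p := holderConjugate_iff.2 (by simpa [one_div, add_comm] using hpp')
  have : q'.HolderConjugate q := holderConjugate_iff.2 (by simpa [one_div, add_comm] using hqq')
  set h : En n → ℝ≥0∞ := fun x => ‖T x‖₊
  set g : En n → ℝ≥0∞ := fun x => ‖f x‖₊
  set a : ℤ → ℝ≥0∞ := fun k => sliceNorm n t r' q' ((shell n k).indicator h)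
  set b : ℤ → ℝ≥0∞ := fun k => sliceNorm n t r q ((shell n k).indicator g)
  have weights_cancel (k : ℤ) : (2 : ℝ≥0∞) ^ ((k : ℝ) * -α) * 2 ^ ((k : ℝ) * α) = 1 := by
    rw [← ENNReal.rpow_add _ _ two_ne_zero ofNat_ne_top, mul_neg, neg_add_cancel, rpow_zero]
  calc ∫⁻ x, h x * g x
      = ∑' k : ℤ, ∫⁻ x, (shell n k).indicator h x * (shell n k).indicator g x := by
        rw [lintegral_eq_tsum_setLIntegral_shell hn]
        refine tsum_congr fun k => ?_
        rw [← lintegral_indicator (measurableSet_shell n k), indicator_mul]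
    _ ≤ ∑' k : ℤ, a k * b k := ENNReal.tsum_le_tsum fun k =>
        lintegral_mul_le_sliceNorm_mul_sliceNorm n ht hr'r
          (hT.nnnorm.coe_nnreal_ennreal.indicator (measurableSet_shell n k))
          (hf.nnnorm.coe_nnreal_ennreal.indicator (measurableSet_shell n k))
    _ = ∫⁻ k : ℤ, (2 ^ ((k : ℝ) * -α) * a k) * (2 ^ ((k : ℝ) * α) * b k) ∂.count := by
        simp_rw [lintegral_count, mul_mul_mul_comm _ (a _), weights_cancel, one_mul]
    _ ≤ _ := lintegral_mul_le_eLpNorm_mul_eLpNorm (measurable_of_countable _).aemeasurable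
        (measurable_of_countable _).aemeasurable
    _ = _ := by
        rw [herzHomC, herzHomC, herzHom_eq_eLpNorm (HolderConjugate.ne_zero p' p),
          herzHom_eq_eLpNorm (HolderConjugate.ne_zero p p')]

/-- Hölder's inequality for homogeneous Herz-slice spaces; every element of the
dual-index space induces a bounded linear functional. -/
theorem homHerzSlice_holder
    (n : ℕ) (hn : 1 ≤ n) (α t r r' : ℝ) (ht : 0 < t) (hr : 1 < r)
    (hrr' : 1 / r + 1 / r' = 1)
    (p p' : ℝ≥0∞) (hp : 1 < p) (hp' : p ≠ ∞) (hpp' : 1 / p + 1 / p' = 1)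
    (q q' : ℝ≥0∞) (hq : 1 ≤ q) (hq' : q ≠ ∞) (hqq' : 1 / q + 1 / q' = 1)
    (T f : En n → ℂ) (hT : Measurable T) (hf : Measurable f) :
    ∫⁻ x, (‖T x‖₊ : ℝ≥0∞) * (‖f x‖₊ : ℝ≥0∞)
      ≤ herzHomC n t r' q' (-α) p' T * herzHomC n t r q α p f :=
  homHerzSlice_holder_general n hn α t r r' ht hr hrr' p p' hpp' q q' hqq' T f hT hf
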